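/- For every computable linear order (P, ≤_P) of order type ω + ω* with no computable infinite ascending or descending sequence, the sets S*(P) (the ω-part) and L*(P) (the ω*-part) are both hyperimmune. -/

import Mathlib

open Classical

/-- The characteristic function of a set of naturals, as a partial function. -/
noncomputable def CharFun (X : Set ℕ) : ℕ →. ℕ :=
  fun n => Part.some (if n ∈ X then 1 else 0)

/-- Partial recursiveness relative to an oracle `O`. -/
inductive RecIn (O : ℕ →. ℕ) : (ℕ →. ℕ) → Prop
  | oracle : RecIn O O
  | zero : RecIn O (fun _ => Part.some 0)
  | succ : RecIn O (fun n => Part.some n.succ)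
  | left : RecIn O (fun n => Part.some n.unpair.1)
  | right : RecIn O (fun n => Part.some n.unpair.2)
  | pair {f g} : RecIn O f → RecIn O g →
      RecIn O (fun n => Nat.pair <$> f n <*> g n)
  | comp {f g} : RecIn O f → RecIn O g →
      RecIn O (fun n => g n >>= f)
  | prec {f g} : RecIn O f → RecIn O g →
      RecIn O (Nat.unpaired fun a n =>
        n.rec (f a) fun y IH => do {let i ← IH; g (Nat.pair a (Nat.pair y i))})
  | rfind {f} : RecIn O f →
      RecIn O (fun a => Nat.rfind fun n => (fun m => decide (m = 0)) <$> f (Nat.pair a n))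

/-- A (typed) function is computable in oracle `O`. -/
def ComputableInOracle {α β : Type} [Primcodable α] [Primcodable β] (O : ℕ →. ℕ) (f : α → β) : Prop :=
  RecIn O (fun n => Part.some (Encodable.encode (Option.map f (Encodable.decode (α := α) n))))

/-- A set of naturals is computable in oracle `O`. -/
def SetComputableIn (O : ℕ →. ℕ) (X : Set ℕ) : Prop :=
  RecIn O (CharFun X)

/-- A (typed) predicate is computably enumerable in oracle `O`. -/
def CEIn {α : Type} [Primcodable α] (O : ℕ →. ℕ) (p : α → Prop) : Prop :=
  ∃ f : ℕ →. ℕ, RecIn O f ∧ ∀ a : α, (f (Encodable.encode a)).Dom ↔ p a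

/-- A (typed) predicate is computably enumerable. -/
def CEPred {α : Type} [Primcodable α] (p : α → Prop) : Prop :=
  ∃ f : α →. Unit, Partrec f ∧ ∀ a, (f a).Dom ↔ p a

/-- A set of naturals is co-c.e. -/
def CoCE (A : Set ℕ) : Prop := CEPred (fun n => n ∉ A)

/-- The members of an array are mutually disjoint. -/
def ArrayDisjoint (F : ℕ → Finset ℕ) : Prop :=
  ∀ i j, i ≠ j → Disjoint (F i) (F j)

/-- An array traces a set `A` if each of its members meets `A`. -/
def Traces (F : ℕ → Finset ℕ) (A : Set ℕ) : Prop :=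
  ∀ i, ∃ x ∈ F i, x ∈ A

/-- A set is hyperimmune if it is infinite and not traced by any computable array. -/
def Hyperimmune (A : Set ℕ) : Prop :=
  A.Infinite ∧ ∀ F : ℕ → Finset ℕ, Computable F → ArrayDisjoint F → ¬ Traces F A

/-- A set is hyperimmune relative to the oracle `O`. -/
def HyperimmuneIn (O : ℕ →. ℕ) (A : Set ℕ) : Prop :=
  A.Infinite ∧ ∀ F : ℕ → Finset ℕ, ComputableInOracle O F → ArrayDisjoint F → ¬ Traces F A

/-- A set is immune if it is infinite and has no infinite computable subset. -/
def Immune (A : Set ℕ) : Prop :=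
  A.Infinite ∧ ∀ W : Set ℕ, W.Infinite → ComputablePred (· ∈ W) → ¬ W ⊆ A

/-- A set is immune relative to the oracle `O`. -/
def ImmuneIn (O : ℕ →. ℕ) (A : Set ℕ) : Prop :=
  A.Infinite ∧ ∀ W : Set ℕ, W.Infinite → SetComputableIn O W → ¬ W ⊆ A

/-- The effective join of two sets of naturals. -/
def SetJoin (Y Z : Set ℕ) : Set ℕ :=
  {n | if n % 2 = 0 then n / 2 ∈ Y else n / 2 ∈ Z}

/-- `X` is Turing reducible to `Z`. -/
def TuringLE (X Z : Set ℕ) : Prop := SetComputableIn (CharFun Z) X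

/-- x is small in the partial order R: below all but finitely many elements. -/
def OrdSmall (R : ℕ → ℕ → Prop) (x : ℕ) : Prop := {y | ¬ R x y}.Finite

/-- x is large in the partial order R: above all but finitely many elements. -/
def OrdLarge (R : ℕ → ℕ → Prop) (x : ℕ) : Prop := {y | ¬ R y x}.Finite

/-- x is isolated in the partial order R: incomparable with all but finitely many. -/
def OrdIsolated (R : ℕ → ℕ → Prop) (x : ℕ) : Prop := {y | R x y ∨ R y x}.Finite

/-! The ω-part `S` of `R` is closed downwards, and the ω*-part `L` upwards. Inside a computable
infinite subset of `S` one can computably pick an `R`-ascending sequence, since every small element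
lies below all but finitely many others; dually for `L`. So neither contains an infinite computable
set, and both are infinite, since a finite `S` would leave the computable set `(N, ∞)` inside `L`.
Finally, given a computable disjoint array `F` tracing `S`, the `R`-least elements of the `F i` are
pairwise distinct members of `S` and form a computable sequence; its range is infinite and c.e.,
so it has an infinite computable subset inside `S`, contradicting immunity. -/

open Function

section

variable {α β σ : Type*} [Primcodable α] [Primcodable β] [Primcodable σ]

theorem Computable.nat_iterate {f : α → ℕ} {g : α → σ} {h : α → σ → σ} (hf : Computable f)
    (hg : Computable g) (hh : Computable₂ h) : Computable fun a => (h a)^[f a] (g a) := by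
  refine (Computable.nat_rec hf hg (hh.comp Computable.fst
    (Computable.snd.comp Computable.snd)).to₂).of_eq fun a => ?_
  induction f a with
  | zero => rfl
  | succ n ih => simp only [ih, iterate_succ_apply']

theorem Computable.list_foldl {f : α → List β} {g : α → σ} {h : α → σ × β → σ}
    (hf : Computable f) (hg : Computable g) (hh : Computable₂ h) :
    Computable fun a => (f a).foldl (fun s b => h a (s, b)) (g a) := by
  -- run the fold as `length` steps of a machine whose state is the accumulator and the rest
  let step (a : α) (p : σ × List β) : σ × List β :=
    (p.2.head?.elim p.1 fun b => h a (p.1, b), p.2.tail)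
  have hstep : Computable₂ step :=
    ((Computable.option_casesOn
      (Primrec.list_head?.to_comp.comp (Computable.snd.comp Computable.snd))
      (Computable.fst.comp Computable.snd) (hh.comp (Computable.fst.comp Computable.fst)
        ((Computable.fst.comp (Computable.snd.comp Computable.fst)).pair Computable.snd)).to₂).pair
      (Primrec.list_tail.to_comp.comp (Computable.snd.comp Computable.snd))).of_eq
      fun ⟨_, _, l⟩ => by cases l <;> rfl
  have hrun : ∀ a l s, ((step a)^[l.length] (s, l)).1 = l.foldl (fun s b => h a (s, b)) s := by
    intro a l
    induction l with
    | nil => intro s; rfl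
    | cons b l ih => intro s; exact ih _
  exact (Computable.fst.comp (Computable.nat_iterate (Computable.list_length.comp hf)
    (hg.pair hf) hstep)).of_eq fun a => hrun a (f a) (g a)

end

open Denumerable Encodable in
lemma primrec_raise'_zero : Primrec fun l : List ℕ => raise' l 0 := by
  have hfold : ∀ (l : List ℕ) (n : ℕ) (acc : List ℕ),
      (l.foldl (fun s m => (m + s.1 + 1, s.2 ++ [m + s.1])) (n, acc)).2 = acc ++ raise' l n := by
    intro l
    induction l with
    | nil => simp [raise']
    | cons m t ih => simp [raise', ih]
  have hstep : Primrec₂ fun (_ : List ℕ) (p : (ℕ × List ℕ) × ℕ) =>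
      (p.2 + p.1.1 + 1, p.1.2 ++ [p.2 + p.1.1]) := by
    have hsum : Primrec fun q : List ℕ × ((ℕ × List ℕ) × ℕ) => q.2.2 + q.2.1.1 :=
      Primrec.nat_add.comp (Primrec.snd.comp Primrec.snd)
        (Primrec.fst.comp (Primrec.fst.comp Primrec.snd))
    exact ((Primrec.succ.comp hsum).pair (Primrec.list_concat.comp
      (Primrec.snd.comp (Primrec.fst.comp Primrec.snd)) hsum)).to₂
  exact (Primrec.snd.comp (Primrec.list_foldl Primrec.id (Primrec.const (0, [])) hstep)).of_eq
    fun l => (hfold l 0 []).trans (List.nil_append _)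

-- `Finset ℕ` is `Primcodable` through its `Denumerable` instance, which decodes via `raise'`;
-- a bare `encode` would pick the unrelated `Finset.encodable`.
open Denumerable Encodable in
lemma primrec_finset_sort : Primrec fun s : Finset ℕ => s.sort := by
  have hsort : ∀ s : Finset ℕ,
      s.sort = raise' (ofNat (List ℕ) (@encode _ Primcodable.toEncodable s)) 0 := by
    intro s
    set n := @encode _ Primcodable.toEncodable s
    have h : ofNat (Finset ℕ) n =
        Finset.map (Equiv.refl ℕ).toEmbedding (raise'Finset (ofNat (List ℕ) n) 0) :=
      ofNat_of_decode rfl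
    rw [ofNat_encode, Equiv.refl_toEmbedding, Finset.map_refl] at h
    rw [h.trans (List.toFinset_eq _)]
    exact (List.toFinset_sort _ (raise'_sorted _ _).nodup).mpr
      (raise'_sorted _ _).sortedLE.pairwise
  exact (primrec_raise'_zero.comp ((Primrec.ofNat _).comp Primrec.encode)).of_eq
    fun s => (hsort s).symm

section FoldMinBy

variable {α : Type*} {R : α → α → Prop}

variable (R) in
noncomputable def foldMinBy (a : α) (l : List α) : α :=
  l.foldl (fun m x => if R m x then m else x) a

lemma foldMinBy_cons (a x : α) (l : List α) :
    foldMinBy R a (x :: l) = foldMinBy R (if R a x then a else x) l :=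
  rfl

lemma foldMinBy_mem (a : α) (l : List α) : foldMinBy R a l ∈ a :: l := by
  induction l generalizing a with
  | nil => exact List.mem_singleton_self a
  | cons x l ih =>
    have h := ih (if R a x then a else x)
    rw [foldMinBy_cons]
    split_ifs at h ⊢ <;> simp only [List.mem_cons] at h ⊢ <;> tauto

lemma rel_foldMinBy [Std.Total R] [IsTrans α R] (a : α) (l : List α) :
    ∀ y ∈ a :: l, R (foldMinBy R a l) y := by
  induction l generalizing a with
  | nil =>
    intro y hy
    rw [List.mem_singleton.mp hy]
    exact refl_of R a
  | cons x l ih =>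
    have hm : R (if R a x then a else x) a ∧ R (if R a x then a else x) x := by
      split_ifs with h
      · exact ⟨refl_of R a, h⟩
      · exact ⟨(total_of R a x).resolve_left h, refl_of R x⟩
    have hmin := ih (if R a x then a else x)
    rw [foldMinBy_cons]
    rintro y (_ | ⟨_, _ | ⟨_, hy⟩⟩)
    · exact _root_.trans (hmin _ List.mem_cons_self) hm.1
    · exact _root_.trans (hmin _ List.mem_cons_self) hm.2
    · exact hmin y (List.mem_cons_of_mem _ hy)

lemma computable₂_foldMinBy [Primcodable α] (hR : ComputablePred fun p : α × α => R p.1 p.2) :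
    Computable₂ (foldMinBy R) := by
  rw [computablePred_iff_computable_decide] at hR
  refine Computable.list_foldl (f := fun p : α × List α => p.2)
    (h := fun _ q => if R q.1 q.2 then q.1 else q.2) Computable.snd Computable.fst ?_
  exact (Computable.cond (hR.comp Computable.snd) (Computable.fst.comp Computable.snd)
    (Computable.snd.comp Computable.snd)).of_eq fun _ => Bool.cond_decide _ _ _

end FoldMinBy

lemma exists_computable_least_mem_finset {α : Type*} [Primcodable α] {R : ℕ → ℕ → Prop}
    [Std.Total R] [IsTrans ℕ R] (hR : ComputablePred fun p : ℕ × ℕ => R p.1 p.2)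
    {F : α → Finset ℕ} (hF : Computable F) (hne : ∀ i, (F i).Nonempty) :
    ∃ g : α → ℕ, Computable g ∧ ∀ i, g i ∈ F i ∧ ∀ y ∈ F i, R (g i) y := by
  have hsort : Computable fun i => (F i).sort := primrec_finset_sort.to_comp.comp hF
  refine ⟨fun i => foldMinBy R (F i).sort.headI (F i).sort.tail,
    (computable₂_foldMinBy hR).comp (Primrec.list_headI.to_comp.comp hsort)
      (Primrec.list_tail.to_comp.comp hsort), fun i => ?_⟩
  obtain ⟨x, l, hl⟩ : ∃ x l, (F i).sort (· ≤ ·) = x :: l := List.exists_cons_of_ne_nil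
    (List.ne_nil_of_mem ((Finset.mem_sort _).mpr (hne i).choose_spec))
  simp only [← Finset.mem_sort (· ≤ ·) (s := F i), hl, List.headI_cons, List.tail_cons]
  exact ⟨foldMinBy_mem x l, rel_foldMinBy x l⟩

lemma computablePred_mem_range_of_strictMono {b : ℕ → ℕ} (hb : Computable b)
    (hmono : StrictMono b) : ComputablePred (· ∈ Set.range b) := by
  have hex : ∀ x, ∃ n, x ≤ b n := fun x => ⟨x, hmono.le_apply⟩
  -- `x` is in the range iff it is hit by the least `n` with `x ≤ b n`
  have hmem : ∀ x, x ∈ Set.range b ↔ b (Nat.find (hex x)) = x := by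
    refine fun x => ⟨?_, fun h => ⟨_, h⟩⟩
    rintro ⟨k, rfl⟩
    refine le_antisymm ?_ (Nat.find_spec (hex (b k)))
    exact hmono.monotone (Nat.find_min' _ le_rfl)
  have hfind : Computable fun x => Nat.find (hex x) :=
    Computable.find (P := fun x n => x ≤ b n) (Computable.computablePred
      (Primrec.nat_le.decide.to_comp.comp Computable.fst (hb.comp Computable.snd))) hex
  refine (Computable.computablePred ?_).of_eq fun x => (hmem x).symm
  exact Primrec.eq.decide.to_comp.comp (hb.comp hfind) Computable.id

lemma strictMono_iterate_of_lt_self {s : ℕ → ℕ} (hlt : ∀ a, a < s a) (a : ℕ) :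
    StrictMono fun n => s^[n] a :=
  strictMono_nat_of_lt_succ fun n => by
    simp only [iterate_succ_apply']
    exact hlt _

lemma computablePred_mem_range_iterate {s : ℕ → ℕ} (hs : Computable s) (hlt : ∀ a, a < s a)
    (a : ℕ) : ComputablePred (· ∈ Set.range fun n => s^[n] a) :=
  computablePred_mem_range_of_strictMono
    (Computable.nat_iterate Computable.id (Computable.const a) (hs.comp Computable.snd).to₂)
    (strictMono_iterate_of_lt_self hlt a)

lemma exists_infinite_computable_subset_range {g : ℕ → ℕ} (hg : Computable g)
    (hinf : (Set.range g).Infinite) :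
    ∃ W : Set ℕ, W.Infinite ∧ ComputablePred (· ∈ W) ∧ W ⊆ Set.range g := by
  have hex : ∀ a, ∃ k, a < g k := fun a => by
    obtain ⟨_, ⟨k, rfl⟩, hk⟩ := hinf.exists_gt a
    exact ⟨k, hk⟩
  obtain ⟨next, hnext, hlt, hrange⟩ : ∃ next : ℕ → ℕ, Computable next ∧ (∀ a, a < next a) ∧
      ∀ a, next a ∈ Set.range g :=
    ⟨fun a => g (Nat.find (hex a)), hg.comp <| Computable.find (P := fun a k => a < g k)
      (Computable.computablePred
        (Primrec.nat_lt.decide.to_comp.comp Computable.fst (hg.comp Computable.snd))) hex,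
      fun a => Nat.find_spec (hex a), fun _ => ⟨_, rfl⟩⟩
  refine ⟨_, Set.infinite_range_of_injective (strictMono_iterate_of_lt_self hlt (next 0)).injective,
    computablePred_mem_range_iterate hnext hlt (next 0), ?_⟩
  rintro _ ⟨n, rfl⟩
  dsimp only
  rw [← iterate_succ_apply, iterate_succ_apply']
  exact hrange _

lemma Immune.hyperimmune {R : ℕ → ℕ → Prop} [Std.Total R] [IsTrans ℕ R]
    (hR : ComputablePred fun p : ℕ × ℕ => R p.1 p.2) {A : Set ℕ} (hA : Immune A)
    (hdown : ∀ ⦃x y⦄, R x y → y ∈ A → x ∈ A) : Hyperimmune A := by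
  refine ⟨hA.1, fun F hF hdisj htr => ?_⟩
  obtain ⟨g, hg, hgmin⟩ := exists_computable_least_mem_finset hR hF fun i =>
    let ⟨x, hx, _⟩ := htr i; ⟨x, hx⟩
  have hgA : Set.range g ⊆ A := by
    rintro _ ⟨i, rfl⟩
    obtain ⟨x, hxF, hxA⟩ := htr i
    exact hdown ((hgmin i).2 x hxF) hxA
  have hginj : Injective g := fun i j hij => by_contra fun hne =>
    Finset.disjoint_left.mp (hdisj i j hne) (hgmin i).1 (hij ▸ (hgmin j).1)
  obtain ⟨W, hW, hWc, hWg⟩ :=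
    exists_infinite_computable_subset_range hg (Set.infinite_range_of_injective hginj)
  exact hA.2 W hW hWc (hWg.trans hgA)

section OrdSmall

variable {R : ℕ → ℕ → Prop}

lemma OrdSmall.of_rel [IsTrans ℕ R] {x y : ℕ} (hxy : R x y) (hy : OrdSmall R y) :
    OrdSmall R x :=
  hy.subset fun _ hz hyz => hz (_root_.trans hxy hyz)

lemma exists_ascending_of_subset_setOf_ordSmall [IsTrans ℕ R]
    (hR : ComputablePred fun p : ℕ × ℕ => R p.1 p.2) {W : Set ℕ} (hW : W.Infinite)
    (hWc : ComputablePred (· ∈ W)) (hsmall : W ⊆ {x | OrdSmall R x}) :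
    ∃ S : Set ℕ, S.Infinite ∧ ComputablePred (· ∈ S) ∧ ∀ x ∈ S, ∀ y ∈ S, x < y → R x y := by
  -- the escape clause `a ∉ W` makes the search total
  have hex : ∀ a, ∃ n, n ∈ W ∧ a < n ∧ (a ∉ W ∨ R a n) := by
    intro a
    by_cases ha : a ∈ W
    · obtain ⟨n, hn, han⟩ := (hW.sdiff (hsmall ha)).exists_gt a
      exact ⟨n, hn.1, han, .inr (not_not.mp hn.2)⟩
    · obtain ⟨n, hn, han⟩ := hW.exists_gt a
      exact ⟨n, hn, han, .inl ha⟩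
  obtain ⟨next, hnext, hspec⟩ : ∃ next : ℕ → ℕ, Computable next ∧
      ∀ a, next a ∈ W ∧ a < next a ∧ (a ∉ W ∨ R a (next a)) := by
    refine ⟨fun a => Nat.find (hex a), ?_, fun a => Nat.find_spec (hex a)⟩
    refine Computable.find (Computable.computablePred ?_) hex
    rw [computablePred_iff_computable_decide] at hR hWc
    simp only [Bool.decide_and, Bool.decide_or, decide_not]
    exact Primrec.and.to_comp.comp (hWc.comp Computable.snd) <|
      Primrec.and.to_comp.comp
        (Primrec.nat_lt.decide.to_comp.comp Computable.fst Computable.snd) <|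
      Primrec.or.to_comp.comp (Primrec.not.to_comp.comp (hWc.comp Computable.fst)) hR
  have hbW : ∀ n, next^[n] (next 0) ∈ W := fun n => by
    rw [← iterate_succ_apply, iterate_succ_apply']
    exact (hspec _).1
  have hlt : ∀ a, a < next a := fun a => (hspec a).2.1
  have hmono := strictMono_iterate_of_lt_self hlt (next 0)
  refine ⟨_, Set.infinite_range_of_injective hmono.injective,
    computablePred_mem_range_iterate hnext hlt (next 0), ?_⟩
  rintro _ ⟨m, rfl⟩ _ ⟨n, rfl⟩ hmn
  refine Nat.rel_of_forall_rel_succ_of_lt R (f := fun n => next^[n] (next 0)) (fun k => ?_)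
    (hmono.lt_iff_lt.mp hmn)
  rw [iterate_succ_apply']
  exact (hspec _).2.2.resolve_left (not_not.mpr (hbW k))

lemma infinite_setOf_ordSmall (htype : ∀ x, OrdSmall R x ∨ OrdLarge R x)
    (hlarge : ∀ W : Set ℕ, W.Infinite → ComputablePred (· ∈ W) → ¬ W ⊆ {x | OrdLarge R x}) :
    {x | OrdSmall R x}.Infinite := by
  intro hfin
  obtain ⟨N, hN⟩ := hfin.bddAbove
  refine hlarge (Set.Ioi N) (Set.Ioi_infinite N) ?_ fun x hx => (htype x).resolve_left fun hs => ?_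
  · exact Computable.computablePred
      (Primrec.nat_lt.decide.to_comp.comp (Computable.const N) Computable.id)
  · exact absurd (hN hs) (not_le.mpr hx)

end OrdSmall

/-- A computable linear order of type ω + ω* with no computable infinite ascending or
descending sequence has hyperimmune ω-part and ω*-part. -/
theorem omega_omegaStar_parts_hyperimmune (R : ℕ → ℕ → Prop)
    (hcomp : ComputablePred (fun p : ℕ × ℕ => R p.1 p.2))
    (hpo : IsPartialOrder ℕ R) (htot : ∀ x y, R x y ∨ R y x)
    (htype : ∀ x, OrdSmall R x ∨ OrdLarge R x)
    (hnone : ¬ ∃ S : Set ℕ, S.Infinite ∧ ComputablePred (· ∈ S) ∧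
      ((∀ x ∈ S, ∀ y ∈ S, x < y → R x y ∧ x ≠ y) ∨
        (∀ x ∈ S, ∀ y ∈ S, x < y → R y x ∧ x ≠ y))) :
    Hyperimmune {x | OrdSmall R x} ∧ Hyperimmune {x | OrdLarge R x} := by
  have := hpo
  have : Std.Total R := ⟨htot⟩
  have hcomp' : ComputablePred fun p : ℕ × ℕ => swap R p.1 p.2 :=
    ((computablePred_iff_computable_decide.mp hcomp).comp
      (Computable.snd.pair Computable.fst)).computablePred
  have hsmall : ∀ W : Set ℕ, W.Infinite → ComputablePred (· ∈ W) → ¬ W ⊆ {x | OrdSmall R x} := by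
    intro W hW hWc hsub
    obtain ⟨S, hS, hSc, hasc⟩ := exists_ascending_of_subset_setOf_ordSmall hcomp hW hWc hsub
    exact hnone ⟨S, hS, hSc, .inl fun x hx y hy hxy => ⟨hasc x hx y hy hxy, hxy.ne⟩⟩
  have hlarge : ∀ W : Set ℕ, W.Infinite → ComputablePred (· ∈ W) → ¬ W ⊆ {x | OrdLarge R x} := by
    intro W hW hWc hsub
    obtain ⟨S, hS, hSc, hdesc⟩ := exists_ascending_of_subset_setOf_ordSmall hcomp' hW hWc hsub
    exact hnone ⟨S, hS, hSc, .inr fun x hx y hy hxy => ⟨hdesc x hx y hy hxy, hxy.ne⟩⟩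
  exact ⟨Immune.hyperimmune hcomp ⟨infinite_setOf_ordSmall htype hlarge, hsmall⟩
      fun _ _ => OrdSmall.of_rel,
    Immune.hyperimmune hcomp'
      ⟨infinite_setOf_ordSmall (R := swap R) (fun x => (htype x).symm) hsmall, hlarge⟩
      fun _ _ => OrdSmall.of_rel (R := swap R)⟩
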